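/- arXiv:math-ph/9906021 — 3 statements merged into one kernel-verified Lean document; each statement's English description precedes it below -/
import Mathlib

section
/- The ABC vector field with coefficients satisfying 1 = A ≥ B ≥ C ≥ 0 is nonsingular (has no zeros) if and only if B² + C² < 1. -/
/-!
At a zero of the field (with `A = 1`) we have `sin z = -C cos y`, `cos z = -B sin x` and
`C sin y = -B cos x`; eliminating `z` through `sin² z + cos² z = 1` and using the Pythagorean
identities for `x` and `y` gives `B² + C² = 1 + 2 (B cos x)²`, so a zero forces `B² + C² ≥ 1`.
Conversely, if `|B² - C²| ≤ 1 ≤ B² + C²`, then `s = √((B² + C² - 1) / 2)` satisfies `|s| ≤ |B|, |C|`,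
so one can solve `C sin y = s = -B cos x`; the same identity then puts `(-B sin x, -C cos y)` on
the unit circle, which yields `z`.
-/

open Real

theorem exists_cos_sin_eq {a b : ℝ} (h : a ^ 2 + b ^ 2 = 1) : ∃ θ, cos θ = a ∧ sin θ = b := by
  set w : ℂ := ⟨a, b⟩
  have hw : ‖w‖ = 1 := by rw [Complex.norm_eq_sqrt_sq_add_sq]; simp [w, h]
  refine ⟨Complex.arg w, ?_, ?_⟩
  · rw [Complex.cos_arg (norm_ne_zero_iff.mp (hw ▸ one_ne_zero)), hw, div_one]
  · rw [Complex.sin_arg, hw, div_one]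

theorem exists_mul_sin_eq {c s : ℝ} (h : |s| ≤ |c|) : ∃ y, c * sin y = s := by
  rcases eq_or_ne c 0 with rfl | hc
  · exact ⟨0, by simpa [eq_comm] using h⟩
  have hsc : |s / c| ≤ 1 := by rw [abs_div]; exact div_le_one_of_le₀ h (abs_nonneg c)
  refine ⟨arcsin (s / c), ?_⟩
  rw [sin_arcsin (abs_le.mp hsc).1 (abs_le.mp hsc).2, mul_div_cancel₀ s hc]

theorem exists_mul_cos_eq {c s : ℝ} (h : |s| ≤ |c|) : ∃ x, c * cos x = s := by
  obtain ⟨y, hy⟩ := exists_mul_sin_eq h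
  exact ⟨π / 2 - y, by rw [cos_pi_div_two_sub, hy]⟩

theorem abc_zero_sq_eq {B C x y z : ℝ} (h₁ : sin z + C * cos y = 0)
    (h₂ : B * sin x + cos z = 0) (h₃ : C * sin y + B * cos x = 0) :
    B ^ 2 + C ^ 2 = 1 + 2 * (B * cos x) ^ 2 := by
  linear_combination (-(sin z - C * cos y)) * h₁ - (cos z - B * sin x) * h₂
    + (C * sin y - B * cos x) * h₃ - B ^ 2 * sin_sq_add_cos_sq x
    - C ^ 2 * sin_sq_add_cos_sq y + sin_sq_add_cos_sq z

theorem abc_exists_zero {B C : ℝ} (hsum : 1 ≤ B ^ 2 + C ^ 2) (hdiff : |B ^ 2 - C ^ 2| ≤ 1) :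
    ∃ x y z, sin z + C * cos y = 0 ∧ B * sin x + cos z = 0 ∧ C * sin y + B * cos x = 0 := by
  set s := √((B ^ 2 + C ^ 2 - 1) / 2)
  have hs : s ^ 2 = (B ^ 2 + C ^ 2 - 1) / 2 := sq_sqrt (by linarith)
  have hdiff' := abs_le.mp hdiff
  obtain ⟨x, hx⟩ : ∃ x, B * cos x = -s :=
    exists_mul_cos_eq (sq_le_sq.mp (by rw [neg_sq]; linarith))
  obtain ⟨y, hy⟩ : ∃ y, C * sin y = s := exists_mul_sin_eq (sq_le_sq.mp (by linarith))
  obtain ⟨z, hzc, hzs⟩ : ∃ z, cos z = -(B * sin x) ∧ sin z = -(C * cos y) := by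
    apply exists_cos_sin_eq
    linear_combination B ^ 2 * sin_sq_add_cos_sq x + C ^ 2 * sin_sq_add_cos_sq y
      - (B * cos x - s) * hx - (C * sin y + s) * hy - 2 * hs
  exact ⟨x, y, z, by rw [hzs]; ring, by rw [hzc]; ring, by rw [hx, hy]; ring⟩

/-- the ABC field with 1 = A ≥ B ≥ C ≥ 0 is nonsingular
iff B² + C² < 1. -/
theorem abc_nonsingular_iff (A B C : ℝ) (hA : A = 1) (hBA : B ≤ A) (hCB : C ≤ B)
    (hC : 0 ≤ C) :
    (∀ x y z : ℝ,
        ¬(A * Real.sin z + C * Real.cos y = 0 ∧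
          B * Real.sin x + A * Real.cos z = 0 ∧
          C * Real.sin y + B * Real.cos x = 0)) ↔ B ^ 2 + C ^ 2 < 1 := by
  subst hA
  simp only [one_mul]
  constructor
  · intro h
    by_contra! hsum
    have hdiff : |B ^ 2 - C ^ 2| ≤ 1 := abs_le.mpr ⟨by nlinarith, by nlinarith⟩
    obtain ⟨x, y, z, hz⟩ := abc_exists_zero hsum hdiff
    exact h x y z hz
  · rintro hlt x y z ⟨h₁, h₂, h₃⟩
    nlinarith [abc_zero_sq_eq h₁ h₂ h₃, sq_nonneg (B * cos x)]
end

section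
/- If the ABC vector field u is nonsingular, then the 1-form α = (A sin z + C cos y)dx + (B sin x + A cos z)dy + (C sin y + B cos x)dz is a contact form, i.e., α ∧ dα is nowhere vanishing. -/
/-- Components of the ABC field = coefficients of the 1-form
α = u₁ dx + u₂ dy + u₃ dz. -/
noncomputable def abc1 (A B C x y z : ℝ) : ℝ := A * Real.sin z + C * Real.cos y
noncomputable def abc2 (A B C x y z : ℝ) : ℝ := B * Real.sin x + A * Real.cos z
noncomputable def abc3 (A B C x y z : ℝ) : ℝ := C * Real.sin y + B * Real.cos x

/-- The coefficient of α ∧ dα with respect to dx ∧ dy ∧ dz, namely u ⬝ curl u. -/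
noncomputable def abcContactFun (A B C x y z : ℝ) : ℝ :=
  abc1 A B C x y z *
      (deriv (fun y' => abc3 A B C x y' z) y - deriv (fun z' => abc2 A B C x y z') z) +
  abc2 A B C x y z *
      (deriv (fun z' => abc1 A B C x y z') z - deriv (fun x' => abc3 A B C x' y z) x) +
  abc3 A B C x y z *
      (deriv (fun x' => abc2 A B C x' y z) x - deriv (fun y' => abc1 A B C x y' z) y)

/-!
The ABC field is a Beltrami field, `curl u = u`. Hence the coefficient `u ⬝ curl u` of `α ∧ dα`
equals `|u|²`, which vanishes only where `u` does.
-/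

theorem sq_add_sq_add_sq_eq_zero {R : Type*} [Ring R] [LinearOrder R] [IsStrictOrderedRing R]
    {a b c : R} : a ^ 2 + b ^ 2 + c ^ 2 = 0 ↔ a = 0 ∧ b = 0 ∧ c = 0 := by
  rw [add_eq_zero_iff_of_nonneg (by positivity) (sq_nonneg c),
    add_eq_zero_iff_of_nonneg (sq_nonneg a) (sq_nonneg b)]
  simp only [pow_eq_zero_iff two_ne_zero, and_assoc]

section Beltrami

variable (A B C x y z : ℝ)

theorem curl_abc_fst :
    deriv (fun y' => abc3 A B C x y' z) y - deriv (fun z' => abc2 A B C x y z') z =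
      abc1 A B C x y z := by
  simp [abc1, abc2, abc3, add_comm]

theorem curl_abc_snd :
    deriv (fun z' => abc1 A B C x y z') z - deriv (fun x' => abc3 A B C x' y z) x =
      abc2 A B C x y z := by
  simp [abc1, abc2, abc3, add_comm]

theorem curl_abc_thd :
    deriv (fun x' => abc2 A B C x' y z) x - deriv (fun y' => abc1 A B C x y' z) y =
      abc3 A B C x y z := by
  simp [abc1, abc2, abc3, add_comm]

theorem abcContactFun_eq_norm_sq :
    abcContactFun A B C x y z =
      abc1 A B C x y z ^ 2 + abc2 A B C x y z ^ 2 + abc3 A B C x y z ^ 2 := by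
  rw [abcContactFun, curl_abc_fst, curl_abc_snd, curl_abc_thd]
  ring

end Beltrami

/-- if the ABC field is nonsingular then
α = u₁ dx + u₂ dy + u₃ dz is a contact form: α ∧ dα is nowhere vanishing. -/
theorem abc_contact_form (A B C : ℝ)
    (hns : ∀ x y z : ℝ,
      ¬(abc1 A B C x y z = 0 ∧ abc2 A B C x y z = 0 ∧ abc3 A B C x y z = 0)) :
    ∀ x y z : ℝ, abcContactFun A B C x y z ≠ 0 := by
  intro x y z
  rw [abcContactFun_eq_norm_sq, Ne, sq_add_sq_add_sq_eq_zero]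
  exact hns x y z
end

section
/- For every orientation-preserving diffeomorphism f : S¹ → S¹ there exists a smooth foliation of the annulus S¹ × [−1,1] by curves of everywhere-negative slope whose holonomy (monodromy) from S¹ × {−1} to S¹ × {+1} along leaves is precisely f. -/
open Function

noncomputable def shearLE (d e : ℝ) (hd : d ≠ 0) : (ℝ × ℝ) ≃L[ℝ] (ℝ × ℝ) :=
  LinearEquiv.toContinuousLinearEquiv
  { toFun := fun p => (d * p.1 + e * p.2, p.2)
    invFun := fun p => ((p.1 - e * p.2) / d, p.2)
    map_add' := by intro p q; simp [Prod.ext_iff]; ring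
    map_smul' := by intro c p; simp [Prod.ext_iff]; ring
    left_inv := by intro p; field_simp; ext <;> simp [hd]
    right_inv := by intro p; simp [Prod.ext_iff]; field_simp; ring }

@[simp] lemma shearLE_apply (d e : ℝ) (hd : d ≠ 0) (p : ℝ × ℝ) :
    shearLE d e hd p = (d * p.1 + e * p.2, p.2) := rfl

lemma contDiff_of_inverse {Φ Ψ : ℝ × ℝ → ℝ × ℝ}
    (hli : Function.LeftInverse Ψ Φ) (hri : Function.RightInverse Ψ Φ)
    (hd : ∀ p, ∃ e : (ℝ × ℝ) ≃L[ℝ] (ℝ × ℝ), HasFDerivAt Φ (e : (ℝ×ℝ) →L[ℝ] (ℝ×ℝ)) p)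
    (hΦ : ContDiff ℝ (⊤ : ℕ∞) Φ) : ContDiff ℝ (⊤ : ℕ∞) Ψ := by
  rw [contDiff_iff_contDiffAt]
  intro q
  obtain ⟨p, rfl⟩ : ∃ p, Φ p = q := ⟨Ψ q, hri q⟩
  obtain ⟨e, he⟩ := hd p
  have hc : ContDiffAt ℝ (⊤ : ℕ∞) Φ p := hΦ.contDiffAt
  have h1 : ContDiffAt ℝ (⊤ : ℕ∞) (hc.localInverse he (by simp)) (Φ p) :=
    hc.to_localInverse he (by simp)
  apply h1.congr_of_eventuallyEq
  have hstrict := hc.hasStrictFDerivAt' he (by simp)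
  have h2 : ∀ᶠ y in nhds (Φ p), Φ (hstrict.localInverse Φ e p y) = y :=
    hstrict.eventually_right_inverse
  have : hc.localInverse he (by simp) = hstrict.localInverse Φ e p := rfl
  rw [this]
  filter_upwards [h2] with y hy
  have h3 : Φ (Ψ y) = y := hri y
  exact (hli.injective (by rw [h3, hy])).symm

set_option maxHeartbeats 2000000 in
/-- for every orientation-preserving diffeomorphism f : S¹ → S¹
(given by a smooth lift F : ℝ → ℝ with positive derivative commuting with the
2π-translation), there is a smooth foliation of the annulus S¹ × [−1,1] by
curves of everywhere-negative slope dz/dθ = −g (g > 0 smooth) whose holonomy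
from S¹ × {−1} to S¹ × {+1} is precisely f.

The leaf through (θ₀, −1) is parametrized as z ↦ (Θ θ₀ z, z), solving
dθ/dz = −1/g (equivalently dz/dθ = −g < 0); the leaves cover the annulus, and
the monodromy θ₀ ↦ Θ θ₀ 1 equals the lift F up to a deck transformation,
i.e. it equals f on the circle. -/
theorem foliation_with_prescribed_monodromy (F : ℝ → ℝ)
    (hF : ContDiff ℝ (⊤ : ℕ∞) F)
    (hF' : ∀ θ, 0 < deriv F θ)
    (hlift : ∀ θ, F (θ + 2 * Real.pi) = F θ + 2 * Real.pi) :
    ∃ g : ℝ → ℝ → ℝ,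
      ContDiff ℝ (⊤ : ℕ∞) (Function.uncurry g) ∧
      (∀ θ z, 0 < g θ z) ∧
      (∀ θ z, g (θ + 2 * Real.pi) z = g θ z) ∧
      ∃ Θ : ℝ → ℝ → ℝ,
        (∀ θ₀, Θ θ₀ (-1) = θ₀) ∧
        (∀ θ₀ z, HasDerivAt (Θ θ₀) (-(1 / g (Θ θ₀ z) z)) z) ∧
        (∀ θ z, z ∈ Set.Icc (-1 : ℝ) 1 → ∃ θ₀, Θ θ₀ z = θ) ∧
        ∃ k : ℤ, ∀ θ₀, Θ θ₀ 1 = F θ₀ + 2 * Real.pi * k := by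
  have pi_pos := Real.pi_pos
  have h2pi : (0:ℝ) < 2*Real.pi := by linarith
  have hFd : Differentiable ℝ F := hF.differentiable (by simp)
  have hF'c : Continuous (deriv F) := hF.continuous_deriv (by simp)
  have hF'per : Function.Periodic (deriv F) (2*Real.pi) := by
    intro θ
    have h1 : HasDerivAt (fun t => F (t + 2*Real.pi)) (deriv F (θ + 2*Real.pi)) θ :=
      HasDerivAt.comp_add_const θ (2*Real.pi) (hFd _).hasDerivAt
    have h2 : (fun t => F (t + 2*Real.pi)) = fun t => F t + 2*Real.pi := funext hlift
    rw [h2] at h1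
    have h3 : HasDerivAt (fun t => F t + 2*Real.pi) (deriv F θ) θ :=
      (hFd θ).hasDerivAt.add_const _
    exact h1.unique h3
  -- min and max of deriv F
  obtain ⟨θm, -, hθm⟩ := isCompact_Icc.exists_isMinOn
    (Set.nonempty_Icc.2 (by linarith : (0:ℝ) ≤ 2*Real.pi)) hF'c.continuousOn
  obtain ⟨θM, -, hθM⟩ := isCompact_Icc.exists_isMaxOn
    (Set.nonempty_Icc.2 (by linarith : (0:ℝ) ≤ 2*Real.pi)) hF'c.continuousOn
  have hm : ∀ θ, deriv F θm ≤ deriv F θ := by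
    intro θ
    obtain ⟨y, hy, hEq⟩ := hF'per.exists_mem_Ico₀ h2pi θ
    rw [hEq]
    exact hθm (Set.mem_Icc.2 ⟨hy.1, hy.2.le⟩)
  have hM : ∀ θ, deriv F θ ≤ deriv F θM := by
    intro θ
    obtain ⟨y, hy, hEq⟩ := hF'per.exists_mem_Ico₀ h2pi θ
    rw [hEq]
    exact hθM (Set.mem_Icc.2 ⟨hy.1, hy.2.le⟩)
  have hm0 : 0 < deriv F θm := hF' θm
  -- choice of k
  obtain ⟨θc, -, hθc⟩ := isCompact_Icc.exists_isMaxOn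
    (Set.nonempty_Icc.2 (by linarith : (0:ℝ) ≤ 2*Real.pi))
    ((hF.continuous.sub continuous_id).continuousOn)
  have hCb : ∀ θ, F θ - θ ≤ F θc - θc := by
    intro θ
    have hper : Function.Periodic (fun θ => F θ - θ) (2*Real.pi) := by
      intro θ; simp only [hlift]; ring
    obtain ⟨y, hy, hEq⟩ := hper.exists_mem_Ico₀ h2pi θ
    rw [hEq]
    exact hθc (Set.mem_Icc.2 ⟨hy.1, hy.2.le⟩)
  obtain ⟨k, hk⟩ := exists_int_lt ((-(F θc - θc) - 1)/(2*Real.pi))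
  have hk2 : (k:ℝ) * (2*Real.pi) < -(F θc - θc) - 1 := (lt_div_iff₀ h2pi).mp hk
  have hkneg : ∀ θ, F θ + 2*Real.pi*(k:ℝ) - θ < 0 := by
    intro θ
    have := hCb θ
    nlinarith
  -- Step B: constants and slope bound
  set m := deriv F θm with hmdef
  set M := deriv F θM with hMdef
  set m' := min m 1 with hm'def
  set Cc := max M 1 with hCcdef
  set δ := m'/(2*Cc) with hδdef
  have hm'0 : 0 < m' := lt_min hm0 one_pos
  have hm'1 : m' ≤ 1 := min_le_right _ _
  have hm'm : m' ≤ m := min_le_left _ _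
  have hCc1 : (1:ℝ) ≤ Cc := le_max_right _ _
  have hCcM : M ≤ Cc := le_max_left _ _
  have hδ0 : 0 < δ := by apply div_pos hm'0; linarith
  have hδC : 2*δ*Cc = m' := by rw [hδdef]; field_simp
  have hkey : ∀ t, -δ < t → t < 1+δ → ∀ θ, m'/2 ≤ 1 + t*(deriv F θ - 1) := by
    intro t ht1 ht2 θ
    have h1 := hm θ
    have h2 := hM θ
    rcases le_or_gt t 0 with h3 | h3
    · rcases le_or_gt (deriv F θ) 1 with h4 | h4
      · nlinarith [mul_nonneg (neg_nonneg.2 h3) (sub_nonneg.2 h4)]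
      · nlinarith [mul_nonneg (by linarith : (0:ℝ) ≤ t + δ) (by linarith : (0:ℝ) ≤ deriv F θ - 1),
          mul_nonneg hδ0.le (by linarith : (0:ℝ) ≤ Cc - deriv F θ)]
    · rcases le_or_gt t 1 with h5 | h5
      · nlinarith [mul_nonneg (by linarith : (0:ℝ) ≤ 1 - t) (by linarith : (0:ℝ) ≤ 1 - m'),
          mul_nonneg h3.le (by linarith : (0:ℝ) ≤ deriv F θ - m')]
      · rcases le_or_gt (deriv F θ) 1 with h4 | h4
        · nlinarith [mul_nonneg (by linarith : (0:ℝ) ≤ 1+δ-t) (by linarith : (0:ℝ) ≤ 1 - deriv F θ),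
            mul_nonneg hδ0.le (by linarith : (0:ℝ) ≤ deriv F θ),
            mul_nonneg hδ0.le (by linarith : (0:ℝ) ≤ Cc - 1)]
        · nlinarith [mul_nonneg (by linarith : (0:ℝ) ≤ t) (by linarith : (0:ℝ) ≤ deriv F θ - 1)]
  clear_value m M m' Cc δ
  clear hmdef hMdef hm'def hCcdef hδdef
  -- Step C: the function lam
  have h12δ : (0:ℝ) < 2*(1+2*δ) := by linarith
  have htarget : Real.pi/(2*(1+2*δ)) < Real.pi/2 := by
    rw [div_lt_div_iff₀ h12δ two_pos]
    nlinarith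
  obtain ⟨a, ha⟩ : ∃ a : ℝ, Real.pi/(2*(1+2*δ)) < Real.arctan a := by
    have h2 : ∀ᶠ x : ℝ in Filter.atTop, Real.pi/(2*(1+2*δ)) < Real.arctan x :=
      (Filter.Tendsto.mono_right Real.tendsto_arctan_atTop nhdsWithin_le_nhds).eventually
        (eventually_gt_nhds htarget)
    exact h2.exists
  have hA0 : 0 < Real.arctan a := lt_trans (by positivity) ha
  have ha0 : 0 < a := by
    by_contra hc
    push_neg at hc
    have : Real.arctan a ≤ Real.arctan 0 := Real.arctan_strictMono.monotone hc
    rw [Real.arctan_zero] at this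
    linarith
  set c := 1/(2*Real.arctan a) with hcdef
  have hc0 : 0 < c := by rw [hcdef]; positivity
  have hcA : c * Real.arctan a = 1/2 := by rw [hcdef]; field_simp
  set lam := fun z : ℝ => 1/2 + c * Real.arctan (a*z) with hlamdef
  set lam' := fun z : ℝ => c * (a/(1+(a*z)^2)) with hlam'def
  have hlamderiv : ∀ z, HasDerivAt lam (lam' z) z := by
    intro z
    have h1 : HasDerivAt (fun z:ℝ => a*z) a z := by
      simpa using (hasDerivAt_id z).const_mul a
    have h2 := (Real.hasDerivAt_arctan (a*z)).comp z h1
    have h3 := (h2.const_mul c).const_add (1/2:ℝ)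
    have h4 : (fun x => 1/2 + c * (Real.arctan ∘ HMul.hMul a) x) = lam := by
      funext x
      simp [hlamdef, Function.comp]
    rw [h4] at h3
    have h5 : lam' z = c * (1 / (1 + (a*z)^2) * a) := by rw [hlam'def]; ring
    rw [h5]
    exact h3
  have hlam'pos : ∀ z, 0 < lam' z := by
    intro z
    rw [hlam'def]
    have : (0:ℝ) < 1 + (a*z)^2 := by positivity
    positivity
  have hπlt : Real.pi < Real.arctan a * (2*(1+2*δ)) := by
    rw [div_lt_iff₀ h12δ] at ha
    linarith
  have hcπ : c * (Real.pi/2) < 1/2 + δ := by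
    rw [hcdef, div_mul_div_comm, div_lt_iff₀ (by positivity : (0:ℝ) < 2*Real.arctan a*2)]
    nlinarith
  have hlambound : ∀ z, -δ < lam z ∧ lam z < 1 + δ := by
    intro z
    have hb1 : Real.arctan (a*z) < Real.pi/2 := Real.arctan_lt_pi_div_two _
    have hb2 : -(Real.pi/2) < Real.arctan (a*z) := Real.neg_pi_div_two_lt_arctan _
    have hu : c * Real.arctan (a*z) < c * (Real.pi/2) := by
      exact mul_lt_mul_of_pos_left hb1 hc0
    have hl : c * (-(Real.pi/2)) < c * Real.arctan (a*z) :=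
      mul_lt_mul_of_pos_left hb2 hc0
    have hl' : -(c * (Real.pi/2)) < c * Real.arctan (a*z) := by
      rw [← mul_neg]; exact hl
    constructor
    · show -δ < 1/2 + c * Real.arctan (a*z)
      linarith
    · show 1/2 + c * Real.arctan (a*z) < 1 + δ
      linarith
  have hlamm1 : lam (-1) = 0 := by
    show 1/2 + c * Real.arctan (a * (-1)) = 0
    rw [mul_neg_one, Real.arctan_neg, mul_neg, hcA]
    norm_num
  have hlam1 : lam 1 = 1 := by
    show 1/2 + c * Real.arctan (a * 1) = 1
    rw [mul_one, hcA]
    norm_num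
  have hlamsm : ContDiff ℝ (⊤ : ℕ∞) lam := by
    rw [hlamdef]
    exact contDiff_const.add (contDiff_const.mul
      (Real.contDiff_arctan.comp (contDiff_const.mul contDiff_id)))
  have hlam'sm : ContDiff ℝ (⊤ : ℕ∞) (fun p : ℝ × ℝ => lam' p.2) := by
    rw [hlam'def]
    apply ContDiff.mul contDiff_const
    exact ContDiff.div contDiff_const
      (contDiff_const.add ((contDiff_const.mul contDiff_snd).pow 2))
      (fun p => by positivity)
  clear_value lam lam'
  clear hlamdef hlam'def hcdef hcA hcπ
  -- Step D: the map φ and its inverse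
  set h := fun θ : ℝ => F θ + 2*Real.pi*(k:ℝ) - θ with hhdef
  have hhneg : ∀ θ, h θ < 0 := hkneg
  have hhper : ∀ θ, h (θ + 2*Real.pi) = h θ := by
    intro θ
    show F (θ + 2*Real.pi) + 2*Real.pi*(k:ℝ) - (θ + 2*Real.pi) = F θ + 2*Real.pi*(k:ℝ) - θ
    rw [hlift]
    ring
  have hhc : ContDiff ℝ (⊤ : ℕ∞) h := by
    rw [hhdef]
    exact (hF.add contDiff_const).sub contDiff_id
  have hh' : ∀ θ, HasDerivAt h (deriv F θ - 1) θ := by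
    intro θ
    have := ((hFd θ).hasDerivAt.add_const (2*Real.pi*(k:ℝ))).sub (hasDerivAt_id θ)
    rw [hhdef]
    exact this
  clear_value h
  set φ := fun (θ₀ z : ℝ) => θ₀ + lam z * h θ₀ with hφdef
  have hφθ' : ∀ θ₀ z, HasDerivAt (fun θ => φ θ z) (1 + lam z * (deriv F θ₀ - 1)) θ₀ := by
    intro θ₀ z
    have := (hasDerivAt_id θ₀).add ((hh' θ₀).const_mul (lam z))
    rw [hφdef]
    exact this
  have hφpos : ∀ θ₀ z, 0 < 1 + lam z * (deriv F θ₀ - 1) := by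
    intro θ₀ z
    have := hkey (lam z) (hlambound z).1 (hlambound z).2 θ₀
    linarith
  have hφmono : ∀ z, StrictMono (fun θ => φ θ z) := by
    intro z
    apply strictMono_of_deriv_pos
    intro θ
    rw [(hφθ' θ z).deriv]
    exact hφpos θ z
  have hφper : ∀ θ z, φ (θ + 2*Real.pi) z = φ θ z + 2*Real.pi := by
    intro θ z
    show θ + 2*Real.pi + lam z * h (θ + 2*Real.pi) = θ + lam z * h θ + 2*Real.pi
    rw [hhper]
    ring
  have hφcont : ∀ z, Continuous (fun θ => φ θ z) := by
    intro z
    rw [hφdef]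
    exact continuous_id.add (continuous_const.mul hhc.continuous)
  clear_value φ
  have hφsurj : ∀ z, Function.Surjective (fun θ => φ θ z) := by
    intro z y
    have hper2 : ∀ (n : ℤ) (x : ℝ), φ (x + n*(2*Real.pi)) z = φ x z + n*(2*Real.pi) := by
      intro n x
      have hp : Function.Periodic (fun θ => φ θ z - θ) (2*Real.pi) := by
        intro θ
        show φ (θ + 2*Real.pi) z - (θ + 2*Real.pi) = φ θ z - θ
        rw [hφper]
        ring
      have h2 : φ (x + (n:ℝ)*(2*Real.pi)) z - (x + (n:ℝ)*(2*Real.pi)) = φ x z - x :=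
        (hp.int_mul n) x
      linarith
    obtain ⟨n, hn⟩ := exists_nat_ge (|y - φ 0 z| / (2*Real.pi))
    have hn1 : |y - φ 0 z| ≤ (n:ℝ)*(2*Real.pi) := by
      rw [div_le_iff₀ h2pi] at hn
      linarith
    have habs := abs_le.mp hn1
    have hlow : φ (-((n:ℝ)*(2*Real.pi))) z ≤ y := by
      have h3 := hper2 (-(n:ℤ)) 0
      push_cast at h3
      rw [zero_add] at h3
      rw [show -((n:ℝ)*(2*Real.pi)) = -(n:ℝ)*(2*Real.pi) by ring, h3]
      linarith [habs.1]
    have hupp : y ≤ φ ((n:ℝ)*(2*Real.pi)) z := by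
      have h3 := hper2 (n:ℤ) 0
      push_cast at h3
      rw [zero_add] at h3
      rw [h3]
      linarith [habs.2]
    have hnn : -((n:ℝ)*(2*Real.pi)) ≤ (n:ℝ)*(2*Real.pi) := by
      have : (0:ℝ) ≤ (n:ℝ)*(2*Real.pi) := by positivity
      linarith
    obtain ⟨θ₀, -, hθ₀⟩ := intermediate_value_Icc hnn ((hφcont z).continuousOn) ⟨hlow, hupp⟩
    exact ⟨θ₀, hθ₀⟩
  -- Step E: Φ, Ψ and smoothness of the inverse
  set Φ := fun p : ℝ × ℝ => (φ p.1 p.2, p.2) with hΦdef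
  set ψ := fun (θ z : ℝ) => Function.invFun (fun θ₀ => φ θ₀ z) θ with hψdef
  set Ψ := fun q : ℝ × ℝ => (ψ q.1 q.2, q.2) with hΨdef
  have hri : ∀ θ z, φ (ψ θ z) z = θ := by
    intro θ z
    exact Function.rightInverse_invFun (hφsurj z) θ
  have hli : ∀ θ z, ψ (φ θ z) z = θ := by
    intro θ z
    exact Function.leftInverse_invFun (hφmono z).injective θ
  clear_value ψ
  have hΨΦ : Function.LeftInverse Ψ Φ := by
    intro p
    show (ψ (φ p.1 p.2) p.2, p.2) = p
    rw [hli]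
  have hΦΨ : Function.RightInverse Ψ Φ := by
    intro q
    show (φ (ψ q.1 q.2) q.2, q.2) = q
    rw [hri]
  have hΦsm : ContDiff ℝ (⊤ : ℕ∞) Φ := by
    rw [hΦdef, hφdef]
    exact (contDiff_fst.add ((hlamsm.comp contDiff_snd).mul
      (hhc.comp contDiff_fst))).prodMk contDiff_snd
  have hΦderiv : ∀ p : ℝ × ℝ, ∃ e : (ℝ×ℝ) ≃L[ℝ] (ℝ×ℝ),
      HasFDerivAt Φ (e : (ℝ×ℝ) →L[ℝ] (ℝ×ℝ)) p := by
    intro p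
    refine ⟨shearLE (1 + lam p.2 * (deriv F p.1 - 1)) (lam' p.2 * h p.1)
      (hφpos p.1 p.2).ne', ?_⟩
    have h1 : HasFDerivAt (fun q : ℝ×ℝ => h q.1)
        ((deriv F p.1 - 1) • ContinuousLinearMap.fst ℝ ℝ ℝ) p :=
      (hh' p.1).comp_hasFDerivAt p hasFDerivAt_fst
    have h2 : HasFDerivAt (fun q : ℝ×ℝ => lam q.2)
        ((lam' p.2) • ContinuousLinearMap.snd ℝ ℝ ℝ) p :=
      (hlamderiv p.2).comp_hasFDerivAt p hasFDerivAt_snd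
    have h3 : HasFDerivAt (fun q : ℝ×ℝ => q.1 + lam q.2 * h q.1)
        (ContinuousLinearMap.fst ℝ ℝ ℝ +
          (lam p.2 • ((deriv F p.1 - 1) • ContinuousLinearMap.fst ℝ ℝ ℝ) +
           h p.1 • (lam' p.2 • ContinuousLinearMap.snd ℝ ℝ ℝ))) p :=
      hasFDerivAt_fst.add (h2.mul h1)
    have h5 := h3.prodMk hasFDerivAt_snd
    have h6 : Φ = fun q : ℝ×ℝ => (q.1 + lam q.2 * h q.1, q.2) := by
      rw [hΦdef, hφdef]
    rw [h6]
    have h7 : ((shearLE (1 + lam p.2 * (deriv F p.1 - 1)) (lam' p.2 * h p.1)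
          (hφpos p.1 p.2).ne') : (ℝ×ℝ) →L[ℝ] (ℝ×ℝ)) =
        (ContinuousLinearMap.fst ℝ ℝ ℝ +
          (lam p.2 • ((deriv F p.1 - 1) • ContinuousLinearMap.fst ℝ ℝ ℝ) +
           h p.1 • (lam' p.2 • ContinuousLinearMap.snd ℝ ℝ ℝ))).prod
          (ContinuousLinearMap.snd ℝ ℝ ℝ) := by
      apply ContinuousLinearMap.ext
      intro q
      simp [shearLE, Prod.ext_iff]
      ring
    rw [h7]
    exact h5
  have hΨsm : ContDiff ℝ (⊤ : ℕ∞) Ψ := contDiff_of_inverse hΨΦ hΦΨ hΦderiv hΦsm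
  -- Step F: final assembly
  refine ⟨fun θ z => -(1/(lam' z * h (ψ θ z))), ?_, ?_, ?_, ?_⟩
  · -- smoothness of g
    have h3 : ContDiff ℝ (⊤ : ℕ∞) (fun p : ℝ×ℝ => (Ψ p).1) := contDiff_fst.comp hΨsm
    have h4 : (fun p : ℝ×ℝ => ψ p.1 p.2) = fun p : ℝ×ℝ => (Ψ p).1 := by
      funext p
      rw [hΨdef]
    have h2 : ContDiff ℝ (⊤ : ℕ∞) (fun p : ℝ×ℝ => h (ψ p.1 p.2)) := by
      rw [show (fun p : ℝ×ℝ => h (ψ p.1 p.2)) = fun p : ℝ×ℝ => h ((Ψ p).1) from funext fun p => congrArg h (congrFun h4 p)]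
      exact hhc.comp h3
    have hden0 : ∀ p : ℝ×ℝ, lam' p.2 * h (ψ p.1 p.2) ≠ 0 := fun p =>
      (mul_neg_of_pos_of_neg (hlam'pos p.2) (hhneg _)).ne
    exact (contDiff_const.div (hlam'sm.mul h2) hden0).neg
  · -- positivity of g
    intro θ z
    have h1 : lam' z * h (ψ θ z) < 0 := mul_neg_of_pos_of_neg (hlam'pos z) (hhneg _)
    have h2 := one_div_neg.mpr h1
    show 0 < -(1/(lam' z * h (ψ θ z)))
    linarith
  · -- periodicity of g
    intro θ z
    have hψper : ψ (θ + 2*Real.pi) z = ψ θ z + 2*Real.pi := by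
      have h1 : φ (ψ θ z + 2*Real.pi) z = θ + 2*Real.pi := by rw [hφper, hri]
      calc ψ (θ + 2*Real.pi) z = ψ (φ (ψ θ z + 2*Real.pi) z) z := by rw [h1]
        _ = ψ θ z + 2*Real.pi := hli _ z
    show -(1/(lam' z * h (ψ (θ + 2*Real.pi) z))) = -(1/(lam' z * h (ψ θ z)))
    rw [hψper, hhper]
  · -- the foliation Θ
    refine ⟨fun θ₀ z => φ θ₀ z, ?_, ?_, ?_, k, ?_⟩
    · intro θ₀
      have h5 : φ θ₀ (-1) = θ₀ + lam (-1) * h θ₀ := by rw [hφdef]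
      show φ θ₀ (-1) = θ₀
      rw [h5, hlamm1]
      ring
    · intro θ₀ z
      have h1 : HasDerivAt (fun z => φ θ₀ z) (lam' z * h θ₀) z := by
        have h2 := ((hlamderiv z).mul_const (h θ₀)).const_add θ₀
        have h3 : (fun z => θ₀ + lam z * h θ₀) = fun z => φ θ₀ z := by
          funext u
          rw [hφdef]
        rw [h3] at h2
        exact h2
      convert h1 using 1
      show -(1/(-(1/(lam' z * h (ψ (φ θ₀ z) z))))) = lam' z * h θ₀
      rw [hli, one_div, one_div, inv_neg, inv_inv, neg_neg]
    · intro θ z _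
      exact ⟨ψ θ z, hri θ z⟩
    · intro θ₀
      have h5 : φ θ₀ 1 = θ₀ + lam 1 * h θ₀ := by rw [hφdef]
      show φ θ₀ 1 = F θ₀ + 2*Real.pi*(k:ℝ)
      rw [h5, hlam1]
      simp only [hhdef]
      ring
end
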